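/- arXiv:1710.11259 — 2 statements merged into one kernel-verified Lean document; each statement's English description precedes it below -/
import Mathlib

section
/- Let A, B, F, X ∈ ℂ^{n×n} with AX − XB = F. Let p_0,…,p_{J−1}, q_0,…,q_{J−1} ∈ ℂ be shift parameters such that each matrix B − p_j I and A − q_j I is invertible, and let X_0, X_1, …, X_J be the ADI iterates. Then the error satisfies the product formula X − X_J = [∏_{j=0}^{J−1} (A − q_j I)^{-1}(A − p_j I)] · X · [∏_{j=0}^{J−1} (B − p_j I)^{-1}(B − q_j I)] (the factors within each product commute, so the products may be taken in increasing order of j). -/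
open Matrix

private lemma smul_one_commute {n : ℕ} (e : ℂ) (M : Matrix (Fin n) (Fin n) ℂ) :
    Commute (e • (1 : Matrix (Fin n) (Fin n) ℂ)) M := by
  unfold Commute SemiconjBy
  rw [smul_mul_assoc, one_mul, mul_smul_comm, mul_one]

private lemma shift_comm {n : ℕ} (A : Matrix (Fin n) (Fin n) ℂ) (c d : ℂ) :
    Commute (A - c • (1 : Matrix (Fin n) (Fin n) ℂ))
      (A - d • (1 : Matrix (Fin n) (Fin n) ℂ)) :=
  (((Commute.refl A).sub_right (smul_one_commute d A).symm).sub_left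
    (smul_one_commute c _))

private lemma commute_inv_right {n : ℕ} {M N : Matrix (Fin n) (Fin n) ℂ}
    (hN : IsUnit N) (h : Commute M N) : Commute M N⁻¹ := by
  have hd : IsUnit N.det := (Matrix.isUnit_iff_isUnit_det N).mp hN
  unfold Commute SemiconjBy
  calc M * N⁻¹ = N⁻¹ * (N * M) * N⁻¹ := by
        rw [← Matrix.mul_assoc, Matrix.nonsing_inv_mul N hd, Matrix.one_mul]
    _ = N⁻¹ * (M * N) * N⁻¹ := by rw [h.eq]
    _ = N⁻¹ * M := by
        rw [Matrix.mul_assoc, Matrix.mul_assoc, Matrix.mul_nonsing_inv N hd,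
          Matrix.mul_one]

/-- **ADI error product formula.**
Let `A, B, F, X ∈ ℂ^{n×n}` with `AX − XB = F`. Let `p 0, …, p (J−1)` and
`q 0, …, q (J−1)` be shift parameters such that each matrix `B − p j • 1` and
`A − q j • 1` is invertible, and let `Xs 0 = 0, Xs 1, …, Xs J` be the ADI iterates
(with half-iterates `Xh j`). Then
`X − Xs J = [∏_{j<J} (A − q j)⁻¹ (A − p j)] * X * [∏_{j<J} (B − p j)⁻¹ (B − q j)]`,
with the products taken in increasing order of `j`. -/
theorem adi_error_product_formula (n J : ℕ)
    (A B F X : Matrix (Fin n) (Fin n) ℂ)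
    (hSyl : A * X - X * B = F)
    (p q : ℕ → ℂ)
    (hBp : ∀ j < J, IsUnit (B - p j • (1 : Matrix (Fin n) (Fin n) ℂ)))
    (hAq : ∀ j < J, IsUnit (A - q j • (1 : Matrix (Fin n) (Fin n) ℂ)))
    (Xs Xh : ℕ → Matrix (Fin n) (Fin n) ℂ)
    (hX0 : Xs 0 = 0)
    (hhalf : ∀ j < J, Xh j * (B - p j • (1 : Matrix (Fin n) (Fin n) ℂ))
      = F - (A - p j • (1 : Matrix (Fin n) (Fin n) ℂ)) * Xs j)
    (hfull : ∀ j < J, (A - q j • (1 : Matrix (Fin n) (Fin n) ℂ)) * Xs (j + 1)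
      = F - Xh j * (B - q j • (1 : Matrix (Fin n) (Fin n) ℂ))) :
    X - Xs J =
      ((List.range J).map
          (fun j => (A - q j • (1 : Matrix (Fin n) (Fin n) ℂ))⁻¹
            * (A - p j • (1 : Matrix (Fin n) (Fin n) ℂ)))).prod
        * X *
      ((List.range J).map
          (fun j => (B - p j • (1 : Matrix (Fin n) (Fin n) ℂ))⁻¹
            * (B - q j • (1 : Matrix (Fin n) (Fin n) ℂ)))).prod := by
  have key : ∀ j < J,
      (A - q j • 1) * (X - Xs (j + 1)) * (B - p j • 1)
        = (A - p j • 1) * (X - Xs j) * (B - q j • 1) := by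
    intro j hj
    have h1 := hhalf j hj
    have h2 := hfull j hj
    have hcomm := (shift_comm B (q j) (p j)).eq
    have hF : F = A * X - X * B := hSyl.symm
    calc (A - q j • 1) * (X - Xs (j + 1)) * (B - p j • 1)
        = ((A - q j • 1) * X - (F - Xh j * (B - q j • 1))) * (B - p j • 1) := by
          rw [Matrix.mul_sub (A - q j • 1) X (Xs (j+1)), h2]
      _ = (X * (B - q j • 1) + Xh j * (B - q j • 1)) * (B - p j • 1) := by
          rw [hF]
          simp only [Matrix.mul_sub, Matrix.sub_mul, Matrix.add_mul,
            smul_mul_assoc, mul_smul_comm, Matrix.one_mul, Matrix.mul_one]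
          module
      _ = (X + Xh j) * ((B - q j • 1) * (B - p j • 1)) := by
          rw [Matrix.add_mul, Matrix.add_mul, Matrix.mul_assoc, Matrix.mul_assoc]
      _ = (X + Xh j) * ((B - p j • 1) * (B - q j • 1)) := by rw [hcomm]
      _ = (X * (B - p j • 1) + Xh j * (B - p j • 1)) * (B - q j • 1) := by
          rw [Matrix.add_mul, Matrix.add_mul, Matrix.mul_assoc, Matrix.mul_assoc]
      _ = (X * (B - p j • 1) + (F - (A - p j • 1) * Xs j)) * (B - q j • 1) := by
          rw [h1]
      _ = (A - p j • 1) * (X - Xs j) * (B - q j • 1) := by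
          rw [hF]
          simp only [Matrix.mul_sub, Matrix.sub_mul, Matrix.add_mul,
            smul_mul_assoc, mul_smul_comm, Matrix.one_mul, Matrix.mul_one]
          module
  suffices h : ∀ k ≤ J, X - Xs k =
      ((List.range k).map (fun j => (A - q j • 1)⁻¹ * (A - p j • 1))).prod * X *
      ((List.range k).map (fun j => (B - p j • 1)⁻¹ * (B - q j • 1))).prod by
    exact h J le_rfl
  intro k hk
  induction k with
  | zero => simp [hX0]
  | succ k ih =>
    have hkJ : k < J := hk
    have ih' := ih (le_of_lt hkJ)
    have hB := hBp k hkJ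
    have hA := hAq k hkJ
    have hBd : IsUnit (B - p k • (1 : Matrix (Fin n) (Fin n) ℂ)).det :=
      (Matrix.isUnit_iff_isUnit_det _).mp hB
    have hAd : IsUnit (A - q k • (1 : Matrix (Fin n) (Fin n) ℂ)).det :=
      (Matrix.isUnit_iff_isUnit_det _).mp hA
    have step : X - Xs (k + 1)
        = (A - q k • 1)⁻¹ * ((A - p k • 1) * (X - Xs k)) *
            ((B - p k • 1)⁻¹ * (B - q k • 1)) := by
      have hq := key k hkJ
      have heq : (A - q k • 1)⁻¹ *
          ((A - q k • 1) * (X - Xs (k + 1)) * (B - p k • 1)) * (B - p k • 1)⁻¹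
          = (A - q k • 1)⁻¹ * ((A - p k • 1) * (X - Xs k) * (B - q k • 1)) *
              (B - p k • 1)⁻¹ := by rw [hq]
      have hL : (A - q k • 1)⁻¹ *
          ((A - q k • 1) * (X - Xs (k + 1)) * (B - p k • 1)) * (B - p k • 1)⁻¹
          = X - Xs (k + 1) := by
        rw [← Matrix.mul_assoc, ← Matrix.mul_assoc,
          Matrix.nonsing_inv_mul _ hAd, Matrix.one_mul, Matrix.mul_assoc,
          Matrix.mul_nonsing_inv _ hBd, Matrix.mul_one]
      rw [hL] at heq
      rw [heq]
      have hc : Commute (B - q k • (1 : Matrix (Fin n) (Fin n) ℂ))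
          (B - p k • (1 : Matrix (Fin n) (Fin n) ℂ))⁻¹ :=
        commute_inv_right hB (shift_comm B (q k) (p k))
      rw [Matrix.mul_assoc ((A - q k • 1)⁻¹), Matrix.mul_assoc, Matrix.mul_assoc,
        Matrix.mul_assoc, hc.eq]
      simp only [Matrix.mul_assoc]
    rw [List.range_succ, List.map_append, List.map_append, List.prod_append,
      List.prod_append, List.map_singleton, List.prod_singleton,
      List.map_singleton, List.prod_singleton]
    rw [step, ih']
    have hcommA : Commute ((A - q k • (1 : Matrix (Fin n) (Fin n) ℂ))⁻¹ * (A - p k • 1))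
        (((List.range k).map (fun j => (A - q j • 1)⁻¹ * (A - p j • 1))).prod) := by
      apply Commute.list_prod_right
      intro x hx
      simp only [List.mem_map, List.mem_range] at hx
      obtain ⟨j, hj, rfl⟩ := hx
      have c1 : Commute (A - q k • (1 : Matrix (Fin n) (Fin n) ℂ))
          ((A - q j • 1)⁻¹ * (A - p j • 1)) :=
        ((commute_inv_right (hAq j (lt_trans hj hkJ))
          (shift_comm A (q k) (q j))).mul_right (shift_comm A (q k) (p j)))
      have c2 : Commute (A - p k • (1 : Matrix (Fin n) (Fin n) ℂ))
          ((A - q j • 1)⁻¹ * (A - p j • 1)) :=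
        ((commute_inv_right (hAq j (lt_trans hj hkJ))
          (shift_comm A (p k) (q j))).mul_right (shift_comm A (p k) (p j)))
      exact ((commute_inv_right hA c1.symm).symm.mul_left c2)
    calc (A - q k • 1)⁻¹ *
          ((A - p k • 1) *
            (((List.range k).map (fun j => (A - q j • 1)⁻¹ * (A - p j • 1))).prod * X *
              ((List.range k).map (fun j => (B - p j • 1)⁻¹ * (B - q j • 1))).prod)) *
          ((B - p k • 1)⁻¹ * (B - q k • 1))
        = ((A - q k • 1)⁻¹ * (A - p k • 1)) *
            ((List.range k).map (fun j => (A - q j • 1)⁻¹ * (A - p j • 1))).prod *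
            (X *
            (((List.range k).map (fun j => (B - p j • 1)⁻¹ * (B - q j • 1))).prod *
              ((B - p k • 1)⁻¹ * (B - q k • 1)))) := by
          simp only [Matrix.mul_assoc]
      _ = ((List.range k).map (fun j => (A - q j • 1)⁻¹ * (A - p j • 1))).prod *
            ((A - q k • 1)⁻¹ * (A - p k • 1)) *
            (X *
            (((List.range k).map (fun j => (B - p j • 1)⁻¹ * (B - q j • 1))).prod *
              ((B - p k • 1)⁻¹ * (B - q k • 1)))) := by
          rw [hcommA.eq]
      _ = _ := by simp only [Matrix.mul_assoc]
end

section
/- Let n ≥ 1 and define n×n real matrices D and M indexed by 0 ≤ j, k ≤ n−1 as follows: D is diagonal with D_{jj} = −(j(j+3) + 2); M is symmetric pentadiagonal with M_{j,j} = 2(j+1)(j+2)/((2j+1)(2j+5)), M_{j,j+1} = M_{j+1,j} = 0, M_{j,j+2} = M_{j+2,j} = −(1/((2j+3)(2j+5))) · √((j+1)(j+2)(j+3)(j+4)(2j+3)/(2j+7)), and all other entries zero. Then every eigenvalue μ of A = D^{-1}M is real and satisfies −1 ≤ μ ≤ −1/(30 n⁴). -/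
/-!
Write `W = -D = diag((j + 1)(j + 2))`. If `D⁻¹ M v = μ v` with `v ≠ 0`, then
`-μ = v* M v / v* W v`, a quotient of real numbers since `M` is real symmetric and `W > 0`; so `μ`
is real, and it suffices to compare the quadratic forms of `M` and `W` on real vectors.
The matrix factors as `M = Rᵀ R` with `R` upper triangular, supported on the diagonal and the
second superdiagonal. Hence `uᵀ M u = |R u|² ≤ 2 ∑ M_jj u_j² ≤ uᵀ W u`. Conversely `u = R⁻¹ (R u)`
with `R⁻¹` explicit, and Cauchy–Schwarz gives `uᵀ W u ≤ (∑_{j,k} W_j (R⁻¹)_{jk}²) |R u|²`; the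
`k`-th column of this weighted Frobenius sum is at most `(k + 2)³`, and `∑_{k<n} (k + 2)³ ≤ 30 n⁴`.
-/

open Matrix Finset

namespace Finset

theorem sum_range_add_two_add_add {M : Type*} [AddCommMonoid M] (f : ℕ → M) (n : ℕ) :
    ∑ i ∈ range n, f (i + 2) + f 1 + f 0 = ∑ i ∈ range n, f i + f n + f (n + 1) := by
  rw [← sum_range_succ, ← sum_range_succ, ← sum_range_succ' (fun i => f (i + 1)),
    ← sum_range_succ']

theorem sum_mul_sq_le_of_eq_sum_mul {ι κ : Type*} {s : Finset ι} {t : Finset κ}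
    {w U : ι → ℝ} {T : ι → κ → ℝ} {x : κ → ℝ} (hw : ∀ j ∈ s, 0 ≤ w j)
    (hU : ∀ j ∈ s, U j = ∑ k ∈ t, T j k * x k) :
    ∑ j ∈ s, w j * U j ^ 2 ≤ (∑ j ∈ s, ∑ k ∈ t, w j * T j k ^ 2) * ∑ k ∈ t, x k ^ 2 := by
  rw [sum_mul]
  refine sum_le_sum fun j hj => ?_
  rw [hU j hj, ← mul_sum, mul_assoc]
  exact mul_le_mul_of_nonneg_left (sum_mul_sq_le_sq_mul_sq t (T j) x) (hw j hj)

end Finset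

namespace Matrix

variable {ι : Type*} [Fintype ι]

theorem re_star_dotProduct_map_ofReal_mulVec (M : Matrix ι ι ℝ) (v : ι → ℂ) :
    (star v ⬝ᵥ M.map (Complex.ofReal ·) *ᵥ v).re =
      (fun i => (v i).re) ⬝ᵥ M *ᵥ (fun i => (v i).re) +
        (fun i => (v i).im) ⬝ᵥ M *ᵥ (fun i => (v i).im) := by
  simp only [dotProduct, mulVec, Complex.re_sum, mul_sum, ← sum_add_distrib]
  refine sum_congr rfl fun i _ => sum_congr rfl fun j _ => ?_
  simp only [Pi.star_apply, map_apply, Complex.mul_re, Complex.mul_im, Complex.star_def,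
    Complex.conj_re, Complex.conj_im, Complex.ofReal_re, Complex.ofReal_im]
  ring

variable [DecidableEq ι]

theorem exists_map_ofReal_mulVec_eq_of_mem_spectrum_diagonal_inv_mul {M : Matrix ι ι ℝ}
    {d : ι → ℝ} (hd : ∀ i, d i ≠ 0) {μ : ℂ}
    (hμ : μ ∈ spectrum ℂ (((diagonal d)⁻¹ * M).map (Complex.ofReal ·))) :
    ∃ v ≠ 0, M.map (Complex.ofReal ·) *ᵥ v = fun i => μ * (d i * v i) := by
  rw [← spectrum_toLin', ← Module.End.hasEigenvalue_iff_mem_spectrum] at hμ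
  obtain ⟨v, hv⟩ := hμ.exists_hasEigenvector
  obtain ⟨hvμ, hv0⟩ := Module.End.hasEigenvector_iff.mp hv
  rw [Module.End.mem_eigenspace_iff, toLin'_apply] at hvμ
  have hM : M = diagonal d * ((diagonal d)⁻¹ * M) := by
    rw [← Matrix.mul_assoc, mul_nonsing_inv _ ((isUnit_diagonal.mpr
      (Pi.isUnit_iff.mpr fun i => (hd i).isUnit)).map detMonoidHom), Matrix.one_mul]
  refine ⟨v, hv0, ?_⟩
  rw [show (Complex.ofReal ·) = ⇑Complex.ofRealHom from rfl] at hvμ ⊢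
  rw [hM, Matrix.map_mul, ← mulVec_mulVec, hvμ]
  ext i
  simp only [Complex.ofRealHom_eq_coe, diagonal_map, Complex.ofReal_zero, mulVec_diagonal,
    Pi.smul_apply, smul_eq_mul]
  ring

theorem IsSymm.im_eq_zero_and_re_mem_Icc_of_mem_spectrum_diagonal_inv_mul {M : Matrix ι ι ℝ}
    (hM : M.IsSymm) {d : ι → ℝ} (hd : ∀ i, 0 < d i) {a b : ℝ}
    (ha : ∀ u : ι → ℝ, a * ∑ i, d i * u i ^ 2 ≤ u ⬝ᵥ M *ᵥ u)
    (hb : ∀ u : ι → ℝ, u ⬝ᵥ M *ᵥ u ≤ b * ∑ i, d i * u i ^ 2)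
    {μ : ℂ} (hμ : μ ∈ spectrum ℂ (((diagonal d)⁻¹ * M).map (Complex.ofReal ·))) :
    μ.im = 0 ∧ μ.re ∈ Set.Icc a b := by
  obtain ⟨v, hv0, hMv⟩ :=
    exists_map_ofReal_mulVec_eq_of_mem_spectrum_diagonal_inv_mul (fun i => (hd i).ne') hμ
  set x : ι → ℝ := fun i => (v i).re
  set y : ι → ℝ := fun i => (v i).im
  set S := ∑ i, d i * x i ^ 2 + ∑ i, d i * y i ^ 2
  have hform : star v ⬝ᵥ M.map (Complex.ofReal ·) *ᵥ v = μ * S := by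
    simp only [hMv, dotProduct, S, ← sum_add_distrib, Complex.ofReal_sum, mul_sum]
    refine sum_congr rfl fun i _ => ?_
    rw [Pi.star_apply, show star (v i) * (μ * (d i * v i)) = μ * d i * (star (v i) * v i) by ring,
      Complex.star_def, ← Complex.normSq_eq_conj_mul_self, Complex.normSq_apply]
    push_cast
    ring
  have hS : 0 < S := by
    obtain ⟨i, hi⟩ := Function.ne_iff.mp hv0
    simp only [S, ← sum_add_distrib, ← mul_add]
    refine sum_pos' (fun j _ => mul_nonneg (hd j).le (by positivity)) ⟨i, mem_univ i, ?_⟩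
    rw [← Complex.normSq_add_mul_I, Complex.re_add_im]
    exact mul_pos (hd i) (Complex.normSq_pos.mpr hi)
  have him := ((isHermitian_iff_isSymm.mpr hM).map _
    fun r => (Complex.conj_ofReal r).symm).im_star_dotProduct_mulVec_self v
  rw [hform, RCLike.im_to_complex, Complex.im_mul_ofReal] at him
  have hre : μ.re * S = x ⬝ᵥ M *ᵥ x + y ⬝ᵥ M *ᵥ y := by
    rw [← Complex.re_mul_ofReal, ← hform, re_star_dotProduct_map_ofReal_mulVec]
  refine ⟨(mul_eq_zero.mp him).resolve_right hS.ne', le_of_mul_le_mul_right ?_ hS,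
    le_of_mul_le_mul_right ?_ hS⟩
  · rw [hre, mul_add]
    exact add_le_add (ha x) (ha y)
  · rw [hre, mul_add]
    exact add_le_add (hb x) (hb y)

end Matrix

namespace Ultraspherical

/- Indices are natural numbers: `weight j = -D j j`, `entry j k = M j k`, and a vector of `ℝⁿ` is
a sequence `U : ℕ → ℝ` vanishing from `n` on. -/
def weight (j : ℕ) : ℝ := ((j : ℝ) + 1) * ((j : ℝ) + 2)

noncomputable def diagEntry (j : ℕ) : ℝ :=
  2 * ((j : ℝ) + 1) * ((j : ℝ) + 2) / ((2 * (j : ℝ) + 1) * (2 * (j : ℝ) + 5))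

noncomputable def superEntry (j : ℕ) : ℝ :=
  -(1 / ((2 * (j : ℝ) + 3) * (2 * (j : ℝ) + 5))) *
    √(((j : ℝ) + 1) * ((j : ℝ) + 2) * ((j : ℝ) + 3) * ((j : ℝ) + 4)
      * (2 * (j : ℝ) + 3) / (2 * (j : ℝ) + 7))

noncomputable def entry (j k : ℕ) : ℝ :=
  if j = k then diagEntry j
  else if k = j + 2 then superEntry j
  else if j = k + 2 then superEntry k
  else 0

/- The Cholesky factor `R` of `M = Rᵀ R`: `R i i = cholDiag i`, `R i (i + 2) = -cholSuper i`, and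
`cholMulVec U = R U`. -/
noncomputable def cholDiag (j : ℕ) : ℝ :=
  √(((j : ℝ) + 3) * ((j : ℝ) + 4) / ((2 * (j : ℝ) + 3) * (2 * (j : ℝ) + 5)))

noncomputable def cholSuper (j : ℕ) : ℝ :=
  √(((j : ℝ) + 1) * ((j : ℝ) + 2) / ((2 * (j : ℝ) + 5) * (2 * (j : ℝ) + 7)))

noncomputable def cholMulVec (U : ℕ → ℝ) (i : ℕ) : ℝ := cholDiag i * U i - cholSuper i * U (i + 2)

/- The entries of `R⁻¹`, obtained by solving `R T = 1` from the bottom row up. -/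
noncomputable def cholInv (j k : ℕ) : ℝ :=
  if j ≤ k ∧ 2 ∣ k - j then
    √(((j : ℝ) + 1) * ((j : ℝ) + 2) * (2 * (j : ℝ) + 3) * (2 * (k : ℝ) + 5) /
      (((k : ℝ) + 1) * ((k : ℝ) + 2) * ((k : ℝ) + 3) * ((k : ℝ) + 4)))
  else 0

lemma weight_pos (j : ℕ) : 0 < weight j := by unfold weight; positivity

lemma entry_comm (j k : ℕ) : entry j k = entry k j := by
  unfold entry
  split_ifs <;> first | omega | subst_vars; rfl

lemma cholDiag_pos (j : ℕ) : 0 < cholDiag j := Real.sqrt_pos.2 (by positivity)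

lemma cholDiag_sq (j : ℕ) :
    cholDiag j ^ 2 = ((j : ℝ) + 3) * ((j : ℝ) + 4) / ((2 * (j : ℝ) + 3) * (2 * (j : ℝ) + 5)) :=
  Real.sq_sqrt (by positivity)

lemma cholSuper_sq (j : ℕ) :
    cholSuper j ^ 2 = ((j : ℝ) + 1) * ((j : ℝ) + 2) / ((2 * (j : ℝ) + 5) * (2 * (j : ℝ) + 7)) :=
  Real.sq_sqrt (by positivity)

lemma superEntry_eq (j : ℕ) : superEntry j = -(cholDiag j * cholSuper j) := by
  rw [superEntry, cholDiag, cholSuper, ← Real.sqrt_mul (by positivity),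
    ← Real.sqrt_sq (show 0 ≤ 1 / ((2 * (j : ℝ) + 3) * (2 * (j : ℝ) + 5)) by positivity),
    neg_mul, ← Real.sqrt_mul (by positivity)]
  congr 2
  field_simp

lemma diagEntry_eq (j : ℕ) :
    diagEntry j = cholDiag j ^ 2 + if 2 ≤ j then cholSuper (j - 2) ^ 2 else 0 := by
  rcases Nat.lt_or_ge j 2 with hj | hj
  · interval_cases j <;> norm_num [diagEntry, cholDiag_sq]
  · obtain ⟨m, rfl⟩ := Nat.exists_eq_add_of_le' hj
    rw [if_pos hj, Nat.add_sub_cancel, diagEntry, cholDiag_sq, cholSuper_sq]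
    push_cast
    field_simp
    ring

lemma two_mul_diagEntry_le_weight (j : ℕ) : 2 * diagEntry j ≤ weight j := by
  rw [diagEntry, weight, mul_div_assoc', div_le_iff₀ (by positivity)]
  have h : (4 : ℝ) ≤ (2 * j + 1) * (2 * j + 5) := by nlinarith [(Nat.cast_nonneg j : (0 : ℝ) ≤ j)]
  nlinarith [mul_le_mul_of_nonneg_left h (weight_pos j).le]

lemma entry_eq_add (j k : ℕ) :
    entry j k = (if k = j then diagEntry j else 0) + (if k = j + 2 then superEntry j else 0) +
      (if j = k + 2 then superEntry k else 0) := by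
  unfold entry
  split_ifs <;> first | omega | (subst_vars; simp)

variable {n : ℕ} {U : ℕ → ℝ}

lemma sum_cholSuper_sq_mul_eq (hU : ∀ k, n ≤ k → U k = 0) :
    ∑ i ∈ range n, cholSuper i ^ 2 * U (i + 2) ^ 2 =
      ∑ i ∈ range n, if 2 ≤ i then cholSuper (i - 2) ^ 2 * U i ^ 2 else 0 := by
  have h :=
    sum_range_add_two_add_add (fun i => if 2 ≤ i then cholSuper (i - 2) ^ 2 * U i ^ 2 else 0) n
  simp only [hU n le_rfl, hU (n + 1) (by omega)] at h
  simpa using h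

lemma sum_sum_mul_entry_mul (hU : ∀ k, n ≤ k → U k = 0) :
    ∑ j ∈ range n, ∑ k ∈ range n, U j * entry j k * U k =
      ∑ j ∈ range n, (diagEntry j * U j ^ 2 + 2 * superEntry j * (U j * U (j + 2))) := by
  simp only [entry_eq_add, mul_add, add_mul, sum_add_distrib, mul_ite, ite_mul, mul_zero, zero_mul,
    sum_ite_eq']
  rw [sum_comm (s := range n) (t := range n)]
  simp only [sum_ite_eq', ← sum_add_distrib]
  refine sum_congr rfl fun j hj => ?_
  rw [if_pos hj]
  split_ifs with h
  · ring
  · rw [hU (j + 2) (by simpa using h)]; ring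

lemma sum_sum_mul_entry_mul_eq_sum_sq (hU : ∀ k, n ≤ k → U k = 0) :
    ∑ j ∈ range n, ∑ k ∈ range n, U j * entry j k * U k = ∑ i ∈ range n, cholMulVec U i ^ 2 := by
  have expand : ∀ i, cholMulVec U i ^ 2 = (cholDiag i ^ 2 * U i ^ 2
      - 2 * (cholDiag i * cholSuper i) * (U i * U (i + 2))) + cholSuper i ^ 2 * U (i + 2) ^ 2 :=
    fun i => by rw [cholMulVec]; ring
  rw [sum_sum_mul_entry_mul hU]
  conv_rhs => rw [sum_congr rfl fun i _ => expand i, sum_add_distrib, sum_cholSuper_sq_mul_eq hU,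
    ← sum_add_distrib]
  refine sum_congr rfl fun j _ => ?_
  rw [diagEntry_eq, superEntry_eq]
  split_ifs <;> ring

lemma sum_cholMulVec_sq_le (hU : ∀ k, n ≤ k → U k = 0) :
    ∑ i ∈ range n, cholMulVec U i ^ 2 ≤ ∑ j ∈ range n, weight j * U j ^ 2 := by
  calc ∑ i ∈ range n, cholMulVec U i ^ 2
      ≤ ∑ i ∈ range n, (2 * (cholDiag i ^ 2 * U i ^ 2) + 2 * (cholSuper i ^ 2 * U (i + 2) ^ 2)) :=
        sum_le_sum fun i _ => by
          rw [cholMulVec]; nlinarith [sq_nonneg (cholDiag i * U i + cholSuper i * U (i + 2))]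
    _ = ∑ j ∈ range n, 2 * diagEntry j * U j ^ 2 := by
        rw [sum_add_distrib, ← mul_sum, ← mul_sum, sum_cholSuper_sq_mul_eq hU, mul_sum, mul_sum,
          ← sum_add_distrib]
        refine sum_congr rfl fun j _ => ?_
        rw [diagEntry_eq]
        split_ifs <;> ring
    _ ≤ ∑ j ∈ range n, weight j * U j ^ 2 :=
        sum_le_sum fun j _ =>
          mul_le_mul_of_nonneg_right (two_mul_diagEntry_le_weight j) (sq_nonneg _)

lemma cholInv_eq_zero_of_lt {j k : ℕ} (h : k < j) : cholInv j k = 0 :=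
  if_neg fun h' => by omega

lemma cholInv_eq (j k : ℕ) :
    cholInv j k =
      (if k = j then (cholDiag j)⁻¹ else 0) + cholSuper j / cholDiag j * cholInv (j + 2) k := by
  rcases eq_or_ne k j with rfl | hne
  · rw [if_pos rfl, cholInv_eq_zero_of_lt (by omega : k < k + 2), mul_zero, add_zero, cholInv,
      if_pos (by simp), cholDiag, ← Real.sqrt_inv]
    congr 1
    field_simp
  rw [if_neg hne, zero_add]
  by_cases hjk : j ≤ k ∧ 2 ∣ k - j
  · rw [cholInv, if_pos hjk, cholInv, if_pos (by omega), cholSuper, cholDiag,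
      ← Real.sqrt_div (by positivity), ← Real.sqrt_mul (by positivity)]
    congr 1
    push_cast
    field_simp
    ring
  · rw [cholInv, if_neg hjk, cholInv, if_neg (by omega), mul_zero]

lemma eq_sum_cholInv_mul_cholMulVec (hU : ∀ k, n ≤ k → U k = 0) (j : ℕ) :
    U j = ∑ k ∈ range n, cholInv j k * cholMulVec U k := by
  induction hm : n - j using Nat.strong_induction_on generalizing j with
  | _ m ih =>
    rcases le_or_gt n j with hnj | hjn
    · rw [hU j hnj, eq_comm]
      exact sum_eq_zero fun k hk => by rw [cholInv_eq_zero_of_lt (by simp at hk; omega), zero_mul]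
    have hnext := ih (n - (j + 2)) (by omega) (j + 2) rfl
    simp only [cholInv_eq j, add_mul, sum_add_distrib, ite_mul, zero_mul, sum_ite_eq',
      if_pos (mem_range.2 hjn), mul_assoc, ← mul_sum]
    rw [← hnext, cholMulVec]
    field_simp [(cholDiag_pos j).ne']
    ring

lemma sum_range_sq_mul_sq_mul_le (k : ℕ) :
    ∑ j ∈ range (k + 1), ((j : ℝ) + 1) ^ 2 * ((j : ℝ) + 2) ^ 2 * (2 * (j : ℝ) + 3) ≤
      ((k : ℝ) + 2) ^ 6 / 3 := by
  induction k with
  | zero => norm_num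
  | succ m ih =>
    rw [sum_range_succ]
    push_cast at ih ⊢
    have hm : (0 : ℝ) ≤ m := Nat.cast_nonneg m
    nlinarith [pow_pos (show (0 : ℝ) < m + 2 by linarith) 4]

lemma sum_range_add_two_pow_three_le (n : ℕ) :
    ∑ k ∈ range n, ((k : ℝ) + 2) ^ 3 ≤ 30 * (n : ℝ) ^ 4 := by
  induction n with
  | zero => simp
  | succ m ih =>
    rw [sum_range_succ]
    push_cast
    have hm : (0 : ℝ) ≤ m := Nat.cast_nonneg m
    nlinarith [pow_pos (show (0 : ℝ) < m + 1 by linarith) 3]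

lemma weight_mul_cholInv_sq_le (j k : ℕ) :
    weight j * cholInv j k ^ 2 ≤ ((j : ℝ) + 1) ^ 2 * ((j : ℝ) + 2) ^ 2 * (2 * (j : ℝ) + 3) *
      ((2 * (k : ℝ) + 5) / (((k : ℝ) + 1) * ((k : ℝ) + 2) * ((k : ℝ) + 3) * ((k : ℝ) + 4))) := by
  rw [cholInv, weight]
  split_ifs
  · rw [Real.sq_sqrt (by positivity)]
    exact le_of_eq (by ring)
  · rw [zero_pow two_ne_zero, mul_zero]
    positivity

lemma sum_weight_mul_cholInv_sq_le (k : ℕ) :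
    ∑ j ∈ range (k + 1), weight j * cholInv j k ^ 2 ≤ ((k : ℝ) + 2) ^ 3 := by
  set c := (2 * (k : ℝ) + 5) / (((k : ℝ) + 1) * ((k : ℝ) + 2) * ((k : ℝ) + 3) * ((k : ℝ) + 4))
  have hc : ((k : ℝ) + 2) ^ 6 / 3 * c ≤ ((k : ℝ) + 2) ^ 3 := by
    rw [div_mul_div_comm, div_le_iff₀ (by positivity)]
    have key : ((k : ℝ) + 2) ^ 2 * (2 * k + 5) ≤ 3 * (k + 1) * (k + 3) * (k + 4) := by nlinarith
    nlinarith [mul_le_mul_of_nonneg_left key (by positivity : (0 : ℝ) ≤ ((k : ℝ) + 2) ^ 4)]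
  calc ∑ j ∈ range (k + 1), weight j * cholInv j k ^ 2
      ≤ ∑ j ∈ range (k + 1), ((j : ℝ) + 1) ^ 2 * ((j : ℝ) + 2) ^ 2 * (2 * (j : ℝ) + 3) * c :=
        sum_le_sum fun j _ => weight_mul_cholInv_sq_le j k
    _ ≤ ((k : ℝ) + 2) ^ 6 / 3 * c := by
        rw [← sum_mul]
        exact mul_le_mul_of_nonneg_right (sum_range_sq_mul_sq_mul_le k) (by positivity)
    _ ≤ ((k : ℝ) + 2) ^ 3 := hc

lemma sum_sum_weight_mul_cholInv_sq_le (n : ℕ) :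
    ∑ j ∈ range n, ∑ k ∈ range n, weight j * cholInv j k ^ 2 ≤ 30 * (n : ℝ) ^ 4 := by
  rw [sum_comm]
  refine le_trans (sum_le_sum fun k hk => ?_) (sum_range_add_two_pow_three_le n)
  rw [← sum_subset (range_subset_range.2 (mem_range.1 hk)) fun j _ hj => by
    rw [cholInv_eq_zero_of_lt (by simpa using hj), zero_pow two_ne_zero, mul_zero]]
  exact sum_weight_mul_cholInv_sq_le k

lemma sum_weight_mul_sq_le (hU : ∀ k, n ≤ k → U k = 0) :
    ∑ j ∈ range n, weight j * U j ^ 2 ≤ 30 * (n : ℝ) ^ 4 * ∑ k ∈ range n, cholMulVec U k ^ 2 :=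
  (sum_mul_sq_le_of_eq_sum_mul (fun j _ => (weight_pos j).le)
    fun j _ => eq_sum_cholInv_mul_cholMulVec hU j).trans
    (mul_le_mul_of_nonneg_right (sum_sum_weight_mul_cholInv_sq_le n)
      (sum_nonneg fun _ _ => sq_nonneg _))

lemma extend_val_eq_zero (u : Fin n → ℝ) (k : ℕ) (hk : n ≤ k) :
    Function.extend Fin.val u 0 k = 0 :=
  Function.extend_apply' _ _ _ fun ⟨i, hi⟩ => by omega

lemma sum_fin_weight_mul_sq (u : Fin n → ℝ) :
    ∑ j : Fin n, weight j * u j ^ 2 =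
      ∑ j ∈ range n, weight j * Function.extend Fin.val u 0 j ^ 2 := by
  rw [← Fin.sum_univ_eq_sum_range]
  simp only [Fin.val_injective.extend_apply]

lemma dotProduct_mulVec_eq_sum_cholMulVec_sq {M : Matrix (Fin n) (Fin n) ℝ}
    (hM : ∀ j k : Fin n, M j k = entry j k) (u : Fin n → ℝ) :
    u ⬝ᵥ M *ᵥ u = ∑ i ∈ range n, cholMulVec (Function.extend Fin.val u 0) i ^ 2 := by
  rw [← sum_sum_mul_entry_mul_eq_sum_sq (extend_val_eq_zero u), ← Fin.sum_univ_eq_sum_range]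
  refine sum_congr rfl fun j _ => ?_
  rw [← Fin.sum_univ_eq_sum_range, mulVec, dotProduct, mul_sum]
  refine sum_congr rfl fun k _ => ?_
  simp only [Fin.val_injective.extend_apply, hM]
  ring

end Ultraspherical

open Ultraspherical

theorem ultraspherical_discretization_eigenvalue_bounds_general (n : ℕ)
    (D M : Matrix (Fin n) (Fin n) ℝ)
    (hD : ∀ j k : Fin n, D j k =
      if j = k then -((j : ℝ) * ((j : ℝ) + 3) + 2) else 0)
    (hM : ∀ j k : Fin n, M j k =
      if j = k then 2 * ((j : ℝ) + 1) * ((j : ℝ) + 2) / ((2 * (j : ℝ) + 1) * (2 * (j : ℝ) + 5))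
      else if (k : ℕ) = (j : ℕ) + 2 then
        -(1 / ((2 * (j : ℝ) + 3) * (2 * (j : ℝ) + 5))) *
          Real.sqrt (((j : ℝ) + 1) * ((j : ℝ) + 2) * ((j : ℝ) + 3) * ((j : ℝ) + 4)
            * (2 * (j : ℝ) + 3) / (2 * (j : ℝ) + 7))
      else if (j : ℕ) = (k : ℕ) + 2 then
        -(1 / ((2 * (k : ℝ) + 3) * (2 * (k : ℝ) + 5))) *
          Real.sqrt (((k : ℝ) + 1) * ((k : ℝ) + 2) * ((k : ℝ) + 3) * ((k : ℝ) + 4)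
            * (2 * (k : ℝ) + 3) / (2 * (k : ℝ) + 7))
      else 0) :
    ∀ μ ∈ spectrum ℂ ((D⁻¹ * M).map (Complex.ofReal ·)),
      μ.im = 0 ∧ -1 ≤ μ.re ∧ μ.re ≤ -1 / (30 * (n : ℝ) ^ 4) := by
  intro μ hμ
  have hMentry : ∀ j k : Fin n, M j k = entry j k := fun j k => by
    rw [hM]
    simp only [entry, diagEntry, superEntry, Fin.val_inj]
  have hDinv : D⁻¹ = -(diagonal fun j : Fin n => weight j)⁻¹ := by
    have hDw : D = -diagonal fun j : Fin n => weight j := by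
      ext j k
      rw [hD, neg_apply, diagonal_apply, weight]
      split_ifs <;> ring
    refine inv_eq_left_inv ?_
    rw [hDw, neg_mul_neg, nonsing_inv_mul]
    simpa [det_diagonal, prod_ne_zero_iff] using fun j : Fin n => (weight_pos j).ne'
  have hsymm : (-M).IsSymm := (IsSymm.ext fun j k => by rw [hMentry, hMentry, entry_comm]).neg
  rw [hDinv, neg_mul, ← mul_neg] at hμ
  refine hsymm.im_eq_zero_and_re_mem_Icc_of_mem_spectrum_diagonal_inv_mul (fun j => weight_pos j)
    (a := -1) (b := -1 / (30 * (n : ℝ) ^ 4)) (fun u => ?_) (fun u => ?_) hμ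
  · rw [neg_mulVec, dotProduct_neg, dotProduct_mulVec_eq_sum_cholMulVec_sq hMentry,
      sum_fin_weight_mul_sq]
    linarith [sum_cholMulVec_sq_le (extend_val_eq_zero u)]
  · rw [neg_mulVec, dotProduct_neg, dotProduct_mulVec_eq_sum_cholMulVec_sq hMentry,
      sum_fin_weight_mul_sq, neg_div, neg_mul, one_div_mul_eq_div, neg_le_neg_iff]
    exact div_le_of_le_mul₀ (by positivity) (sum_nonneg fun _ _ => sq_nonneg _)
      ((sum_weight_mul_sq_le (extend_val_eq_zero u)).trans_eq (mul_comm _ _))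

/-- Eigenvalue bounds for the ultraspherical spectral discretization matrix
`A = D⁻¹ M` on the square: `D` is diagonal with `D_{jj} = −(j(j+3) + 2)` and `M` is
the symmetric pentadiagonal multiplication matrix for `1 − x²` in the normalized
ultraspherical basis (indices `0 ≤ j, k ≤ n−1`).  Every eigenvalue `μ` of `A` is
real and satisfies `−1 ≤ μ ≤ −1/(30 n⁴)`. -/
theorem ultraspherical_discretization_eigenvalue_bounds (n : ℕ) (hn : 1 ≤ n)
    (D M : Matrix (Fin n) (Fin n) ℝ)
    (hD : ∀ j k : Fin n, D j k =
      if j = k then -((j : ℝ) * ((j : ℝ) + 3) + 2) else 0)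
    (hM : ∀ j k : Fin n, M j k =
      if j = k then 2 * ((j : ℝ) + 1) * ((j : ℝ) + 2) / ((2 * (j : ℝ) + 1) * (2 * (j : ℝ) + 5))
      else if (k : ℕ) = (j : ℕ) + 2 then
        -(1 / ((2 * (j : ℝ) + 3) * (2 * (j : ℝ) + 5))) *
          Real.sqrt (((j : ℝ) + 1) * ((j : ℝ) + 2) * ((j : ℝ) + 3) * ((j : ℝ) + 4)
            * (2 * (j : ℝ) + 3) / (2 * (j : ℝ) + 7))
      else if (j : ℕ) = (k : ℕ) + 2 then
        -(1 / ((2 * (k : ℝ) + 3) * (2 * (k : ℝ) + 5))) *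
          Real.sqrt (((k : ℝ) + 1) * ((k : ℝ) + 2) * ((k : ℝ) + 3) * ((k : ℝ) + 4)
            * (2 * (k : ℝ) + 3) / (2 * (k : ℝ) + 7))
      else 0) :
    ∀ μ ∈ spectrum ℂ ((D⁻¹ * M).map (Complex.ofReal ·)),
      μ.im = 0 ∧ -1 ≤ μ.re ∧ μ.re ≤ -1 / (30 * (n : ℝ) ^ 4) :=
  ultraspherical_discretization_eigenvalue_bounds_general n D M hD hM
end
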